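/- arXiv:math/0603513 — 6 statements merged into one kernel-verified Lean document; each statement's English description precedes it below -/
import Mathlib

section
/- Let G be a hereditarily non-topologizable group and let H be a subgroup of G. Then H has a smallest subgroup N of finite index, i.e. N has finite index in H and N is contained in every finite-index subgroup of H; moreover N is perfect, i.e. N = [N, N]. -/
/-!
A non-topologizable group that embeds in a compact Hausdorff group is finite: the induced group
topology is discrete, so the image is a discrete, hence closed, hence compact, hence finite
subgroup.

Applied to the embedding of `H ⧸ M` into the product of the finite quotients of `H`, where `M` is
the intersection of the finite-index normal subgroups of `H`, this shows that `M` has finite index;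
it is then the smallest finite-index subgroup. Applied to the abelianization of `M`, which embeds
in a power of `ℝ/ℤ` because characters with values in `ℚ/ℤ` separate points, it shows that
`[M, M]` has finite index in `M`, hence in `H`, so `M ≤ [M, M]`.
-/

def NonTopologizable (G : Type*) [Group G] : Prop :=
  ∀ t : TopologicalSpace G, @IsTopologicalGroup G t _ → @T2Space G t → t = ⊥

def HereditarilyNonTopologizable (G : Type*) [Group G] : Prop :=
  ∀ (H : Subgroup G) (N : Subgroup ↥H) [N.Normal], NonTopologizable (↥H ⧸ N)

namespace NonTopologizable

variable {G K : Type*} [Group G] [Group K]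

theorem induced_eq_bot (hG : NonTopologizable G) [TopologicalSpace K] [IsTopologicalGroup K]
    [T2Space K] {f : G →* K} (hf : Function.Injective f) :
    TopologicalSpace.induced f ‹_› = ⊥ :=
  letI := TopologicalSpace.induced f ‹_›
  hG _ (topologicalGroup_induced f) (.of_injective_continuous hf continuous_induced_dom)

theorem of_mulEquiv (hG : NonTopologizable G) (e : G ≃* K) : NonTopologizable K := by
  intro t _ _
  let := t.induced e
  have : DiscreteTopology G := ⟨hG.induced_eq_bot (f := e.toMonoidHom) e.injective⟩
  have he : Continuous e.symm := continuous_induced_rng.2 <| by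
    simpa [Function.comp_def] using continuous_id'
  exact (DiscreteTopology.of_continuous_injective he e.symm.injective).eq_bot

theorem finite_of_injective (hG : NonTopologizable G) [TopologicalSpace K] [IsTopologicalGroup K]
    [T2Space K] [CompactSpace K] {f : G →* K} (hf : Function.Injective f) : Finite G := by
  obtain ⟨U, hU, hU1⟩ : ∃ U : Set K, IsOpen U ∧ f ⁻¹' U = {1} := by
    rw [← isOpen_induced_iff, hG.induced_eq_bot hf]
    trivial
  have : DiscreteTopology f.range := by
    refine discreteTopology_of_isOpen_singleton_one (isOpen_induced_iff.mpr ⟨U, hU, ?_⟩)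
    ext ⟨_, g, rfl⟩
    simpa [Subtype.ext_iff, map_eq_one_iff f hf] using Set.ext_iff.mp hU1 g
  have : CompactSpace f.range :=
    isCompact_iff_compactSpace.mp Subgroup.isClosed_of_discrete.isCompact
  have : Finite f.range := finite_of_compact_of_discrete
  exact Finite.of_equiv _ (MonoidHom.ofInjective hf).symm.toEquiv

end NonTopologizable

namespace AddCircle

noncomputable def ratCastHom : AddCircle (1 : ℚ) →+ AddCircle (1 : ℝ) :=
  QuotientAddGroup.map _ _ (Rat.castHom ℝ).toAddMonoidHom <|
    AddSubgroup.zmultiples_le.mpr <| by simp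

theorem ratCastHom_injective : Function.Injective ratCastHom := by
  refine (injective_iff_map_eq_zero _).mpr fun x hx => ?_
  induction x using QuotientAddGroup.induction_on with | H q =>
  obtain ⟨n, hn⟩ := (coe_eq_zero_iff _).mp hx
  simp only [zsmul_one, RingHom.toAddMonoidHom_eq_coe, AddMonoidHom.coe_coe,
    Rat.coe_castHom] at hn
  exact (coe_eq_zero_iff _).mpr ⟨n, by rw [zsmul_one]; exact_mod_cast hn⟩

end AddCircle

theorem exists_monoidHom_addCircle_apply_ne_one {A : Type*} [CommGroup A] {a : A} (ha : a ≠ 1) :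
    ∃ χ : A →* Multiplicative (AddCircle (1 : ℝ)), χ a ≠ 1 := by
  obtain ⟨c, hc⟩ := CharacterModule.exists_character_apply_ne_zero_of_ne_zero
    (a := Additive.ofMul a) ha
  exact ⟨MonoidHom.toAdditiveLeft.symm (AddCircle.ratCastHom.comp c),
    fun h => hc <| (injective_iff_map_eq_zero _).mp AddCircle.ratCastHom_injective _ h⟩

theorem NonTopologizable.finite_of_commGroup {A : Type*} [CommGroup A] (hA : NonTopologizable A) :
    Finite A := by
  let χ : A →* ∀ _ : A →* Multiplicative (AddCircle (1 : ℝ)), Multiplicative (AddCircle (1 : ℝ)) :=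
    MonoidHom.pi fun χ => χ
  refine hA.finite_of_injective (f := χ) <| (injective_iff_map_eq_one _).mpr fun a ha => ?_
  by_contra ha1
  obtain ⟨ψ, hψ⟩ := exists_monoidHom_addCircle_apply_ne_one ha1
  exact hψ (congrFun ha ψ)

theorem HereditarilyNonTopologizable.of_injective {G H : Type*} [Group G] [Group H]
    (hG : HereditarilyNonTopologizable G) {f : H →* G} (hf : Function.Injective f) :
    HereditarilyNonTopologizable H := by
  intro K N _
  let e : K ≃* K.map f := K.equivMapOfInjective f hf
  have : (N.map (e : K →* K.map f)).Normal := Subgroup.Normal.map ‹_› _ e.surjective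
  exact (hG _ (N.map (e : K →* K.map f))).of_mulEquiv (QuotientGroup.congr _ _ e rfl).symm

section FiniteIndex

variable {G : Type*} [Group G]

theorem exists_least_finiteIndex_subgroup
    (hG : ∀ (N : Subgroup G) [N.Normal], NonTopologizable (G ⧸ N)) :
    ∃ N : Subgroup G, N.FiniteIndex ∧ ∀ K : Subgroup G, K.FiniteIndex → N ≤ K := by
  let π : G →* ∀ K : FiniteIndexNormalSubgroup G, G ⧸ K.toSubgroup :=
    MonoidHom.pi fun K => QuotientGroup.mk' _
  let _ (K : FiniteIndexNormalSubgroup G) : TopologicalSpace (G ⧸ K.toSubgroup) := ⊥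
  have _ (K : FiniteIndexNormalSubgroup G) : DiscreteTopology (G ⧸ K.toSubgroup) := ⟨rfl⟩
  have : Finite (G ⧸ π.ker) :=
    (hG π.ker).finite_of_injective (QuotientGroup.kerLift_injective π)
  refine ⟨π.ker, Subgroup.finiteIndex_of_finite_quotient, fun K _ g hg => ?_⟩
  exact K.normalCore_le <| (QuotientGroup.eq_one_iff g).mp <|
    congrFun hg (.ofSubgroup K.normalCore)

theorem Subgroup.eq_commutator_of_forall_finiteIndex_le {N : Subgroup G} [N.FiniteIndex]
    (hN : ∀ K : Subgroup G, K.FiniteIndex → N ≤ K)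
    (hab : NonTopologizable (Abelianization N)) : N = ⁅N, N⁆ := by
  have : Finite (N ⧸ _root_.commutator N) := hab.finite_of_commGroup
  have : (_root_.commutator N).FiniteIndex := finiteIndex_of_finite_quotient
  have hfin : ((_root_.commutator N).map N.subtype).FiniteIndex := by
    constructor
    rw [index_map_subtype]
    exact mul_ne_zero FiniteIndex.index_ne_zero FiniteIndex.index_ne_zero
  exact le_antisymm (N.map_subtype_commutator ▸ hN _ hfin) N.commutator_le_self

end FiniteIndex

theorem smallest_finite_index_subgroup_perfect {G : Type*} [Group G]
    (hG : HereditarilyNonTopologizable G) (H : Subgroup G) :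
    ∃ N : Subgroup ↥H, N.FiniteIndex ∧ (∀ K : Subgroup ↥H, K.FiniteIndex → N ≤ K) ∧
      N = ⁅N, N⁆ := by
  obtain ⟨N, hfin, hN⟩ := exists_least_finiteIndex_subgroup (hG H)
  have hH := hG.of_injective H.subtype_injective
  exact ⟨N, hfin, hN, N.eq_commutator_of_forall_finiteIndex_le hN (hH N (commutator N))⟩
end

section
/- Let G be a hereditarily non-topologizable group and let H be a subgroup of G. Then there exists a natural number n such that H^(n) = H^(n+1), where H^(k) denotes the k-th derived subgroup of H. -/
namespace Subgroup

variable {G ι : Type*} [Group G]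

instance normal_iInf (D : ι → Subgroup G) [∀ i, (D i).Normal] : (⨅ i, D i).Normal :=
  normal_iInf_normal inferInstance

abbrev groupFilterBasisOfNormal [Nonempty ι] (D : ι → Subgroup G) [∀ i, (D i).Normal]
    (hD : Directed (· ≥ ·) D) : GroupFilterBasis G where
  sets := Set.range fun i => (D i : Set G)
  nonempty := Set.range_nonempty _
  inter_sets := by
    rintro _ _ ⟨i, rfl⟩ ⟨j, rfl⟩
    obtain ⟨k, hki, hkj⟩ := hD i j
    exact ⟨_, ⟨k, rfl⟩, Set.subset_inter hki hkj⟩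
  one' := by
    rintro _ ⟨i, rfl⟩
    exact (D i).one_mem
  mul' := by
    rintro _ ⟨i, rfl⟩
    exact ⟨_, ⟨i, rfl⟩, Set.mul_subset_iff.2 fun _ hx _ hy => (D i).mul_mem hx hy⟩
  inv' := by
    rintro _ ⟨i, rfl⟩
    exact ⟨_, ⟨i, rfl⟩, fun _ => (D i).inv_mem⟩
  conj' := by
    rintro g _ ⟨i, rfl⟩
    exact ⟨_, ⟨i, rfl⟩, fun x hx => Normal.conj_mem inferInstance x hx g⟩

theorem map_mk'_iInf {N : Subgroup G} [N.Normal] (D : ι → Subgroup G) (hN : ∀ i, N ≤ D i) :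
    (⨅ i, D i).map (QuotientGroup.mk' N) = ⨅ i, (D i).map (QuotientGroup.mk' N) := by
  apply comap_injective (QuotientGroup.mk'_surjective N)
  simp only [comap_iInf, comap_map_eq, QuotientGroup.ker_mk', sup_of_le_left (le_iInf hN),
    sup_of_le_left (hN _)]

end Subgroup

namespace NonTopologizable

variable {G ι : Type*} [Group G] [Nonempty ι]

theorem exists_eq_bot (hG : NonTopologizable G) (D : ι → Subgroup G) [∀ i, (D i).Normal]
    (hD : Directed (· ≥ ·) D) (hbot : ⨅ i, D i = ⊥) : ∃ i, D i = ⊥ := by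
  let B := Subgroup.groupFilterBasisOfNormal D hD
  let _ := B.topology
  have : T2Space G := by
    rw [B.t2Space_iff_sInter_subset rfl]
    intro x hx
    have : x ∈ ⨅ i, D i := Subgroup.mem_iInf.2 fun i => hx _ ⟨i, rfl⟩
    simpa [hbot] using this
  have : DiscreteTopology G := ⟨hG _ B.isTopologicalGroup this⟩
  obtain ⟨_, ⟨i, rfl⟩, hi⟩ :=
    B.nhds_one_hasBasis.mem_iff.mp ((isOpen_discrete {1}).mem_nhds rfl)
  exact ⟨i, (Subgroup.eq_bot_iff_forall _).2 fun x hx => hi hx⟩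

theorem exists_eq_iInf (D : ι → Subgroup G) [∀ i, (D i).Normal] (hD : Directed (· ≥ ·) D)
    (hG : NonTopologizable (G ⧸ ⨅ i, D i)) : ∃ i, D i = ⨅ i, D i := by
  set N := ⨅ i, D i
  have hsurj := QuotientGroup.mk'_surjective N
  have (i : ι) : ((D i).map (QuotientGroup.mk' N)).Normal :=
    Subgroup.Normal.map inferInstance _ hsurj
  obtain ⟨i, hi⟩ := exists_eq_bot hG (fun i => (D i).map (QuotientGroup.mk' N))
    (hD.mono_comp (rb := (· ≥ ·)) _ fun _ _ h => Subgroup.map_mono h)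
    (by rw [← Subgroup.map_mk'_iInf D (iInf_le D), QuotientGroup.map_mk'_self])
  rw [Subgroup.map_eq_bot_iff, QuotientGroup.ker_mk'] at hi
  exact ⟨i, le_antisymm hi (iInf_le D i)⟩

end NonTopologizable

theorem derivedSeries_stabilizes {G : Type*} [Group G]
    (hG : HereditarilyNonTopologizable G) (H : Subgroup G) :
    ∃ n : ℕ, derivedSeries ↥H n = derivedSeries ↥H (n + 1) := by
  obtain ⟨n, hn⟩ :=
    NonTopologizable.exists_eq_iInf _ (derivedSeries_antitone H).directed_ge (hG H _)
  exact ⟨n, le_antisymm (hn.le.trans (iInf_le _ _)) (derivedSeries_antitone H n.le_succ)⟩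
end

section
/- A countable group G, equipped with the discrete topology, is c-compact if and only if G is hereditarily non-topologizable. -/
universe u

def CCompact (G : Type u) [Group G] [TopologicalSpace G] : Prop :=
  ∀ (H : Type u) [Group H] [TopologicalSpace H] [IsTopologicalGroup H] [T2Space H]
    (S : Subgroup (G × H)), IsClosed (S : Set (G × H)) →
      IsClosed (Prod.snd '' (S : Set (G × H)))

/-!
If `G` is c-compact, every homomorphism from a subgroup `H ≤ G` to a Hausdorff group has closed
image, because its graph is closed in `G × K` (`G` is discrete). If `H ⧸ N` carried a non-discrete
Hausdorff group topology, countability of `H ⧸ N` yields a sequence of neighbourhoods of `1`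
defining a coarser, metrizable, still non-discrete and Hausdorff group topology. In the completion
of `H ⧸ N` by two-sided Cauchy sequences, `H ⧸ N` is dense, and a diagonal argument against an
enumeration of `H ⧸ N` produces a Cauchy sequence converging to no element of it: the image is not
closed.

Conversely, let `S ≤ G × H` be closed, `B` its projection to `H` and `N = {h | (1, h) ∈ S}`,
a closed subgroup of `H`. Goursat's lemma identifies `B ⧸ N` with a quotient of a subgroup of `G`,
so the Hausdorff group `B ⧸ N` is discrete and `N` is open in `B`. A subgroup containing a
closed subgroup that is open in it is closed.
-/
open Filter Set Function
open scoped Topology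

theorem NonTopologizable.of_mulEquiv_s4 {X Y : Type*} [Group X] [Group Y] (e : X ≃* Y)
    (hX : NonTopologizable X) : NonTopologizable Y := by
  intro t _ _
  let tX : TopologicalSpace X := t.induced e
  have : IsTopologicalGroup X := topologicalGroup_induced e
  have : T2Space X := T2Space.of_injective_continuous e.injective continuous_induced_dom
  have : DiscreteTopology X := ⟨hX tX ‹_› ‹_›⟩
  have he : Continuous e.symm := continuous_induced_rng.2 (by simpa [comp_def] using continuous_id')
  exact (DiscreteTopology.of_continuous_injective he e.symm.injective).eq_bot

theorem NonTopologizable.discreteTopology {X : Type*} [Group X] [t : TopologicalSpace X]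
    [IsTopologicalGroup X] [T2Space X] (hX : NonTopologizable X) : DiscreteTopology X :=
  ⟨hX t ‹_› ‹_›⟩

theorem Subgroup.isClosed_of_isOpen_of_isClosed_image {H : Type*} [Group H] [TopologicalSpace H]
    [IsTopologicalGroup H] {B : Subgroup H} {N : Subgroup B} (hNo : IsOpen (N : Set B))
    (hNc : IsClosed (((↑) : B → H) '' N)) : IsClosed (B : Set H) := by
  obtain ⟨V, hVo, hVN⟩ := isOpen_induced_iff.1 hNo
  have hV : V ∈ 𝓝 (1 : H) := by
    have h1 : (1 : B) ∈ (N : Set B) := N.one_mem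
    rw [← hVN] at h1
    exact hVo.mem_nhds h1
  obtain ⟨W, hW, hWV⟩ := exists_nhds_split_inv hV
  refine isClosed_of_closure_subset fun x hx => ?_
  have hWx : (· * x⁻¹) ⁻¹' W ∈ 𝓝 x :=
    (continuous_mul_const x⁻¹).continuousAt.preimage_mem_nhds (by simpa using hW)
  obtain ⟨b, hbW, hbB⟩ := mem_closure_iff_nhds.1 hx _ hWx
  have hnear : (· * x⁻¹) ⁻¹' W ∩ B ⊆ (· * b⁻¹) ⁻¹' (((↑) : B → H) '' N) := by
    rintro c ⟨hcW, hcB⟩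
    refine ⟨⟨c * b⁻¹, mul_mem hcB (inv_mem hbB)⟩, ?_, rfl⟩
    rw [← hVN]
    simpa [div_eq_mul_inv, mul_assoc] using hWV _ hcW _ hbW
  have hx' : x ∈ _root_.closure ((· * x⁻¹) ⁻¹' W ∩ B) := by
    rw [mem_closure_iff_nhds]
    intro U hU
    rw [← inter_assoc]
    exact mem_closure_iff_nhds.1 hx _ (inter_mem hU hWx)
  obtain ⟨n, -, hn⟩ := closure_minimal hnear (hNc.preimage (continuous_mul_const _)) hx'
  rw [show x = n * b by simp [hn]]
  exact mul_mem n.2 hbB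

theorem CCompact.of_hereditarilyNonTopologizable {G : Type u} [Group G] [TopologicalSpace G]
    (hG : HereditarilyNonTopologizable G) : CCompact G := by
  intro H _ _ _ _ S hS
  let A := S.map (MonoidHom.fst G H)
  let B := S.map (MonoidHom.snd G H)
  let I : Subgroup (A × B) :=
    (((MonoidHom.fst G H).subgroupMap S).prod ((MonoidHom.snd G H).subgroupMap S)).range
  have hI : ∀ a b, (a, b) ∈ I ↔ ((a : G), (b : H)) ∈ S := by
    rintro ⟨a, ha⟩ ⟨b, hb⟩
    constructor
    · rintro ⟨⟨s, hs⟩, hab⟩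
      simp only [MonoidHom.prod_apply, Prod.ext_iff, Subtype.ext_iff] at hab
      simpa [← hab.1, ← hab.2] using hs
    · intro hab
      exact ⟨⟨(a, b), hab⟩, rfl⟩
  have hI₁ : Surjective (Prod.fst ∘ I.subtype) := by
    rintro ⟨_, s, hs, rfl⟩
    exact ⟨⟨_, (hI ⟨_, s, hs, rfl⟩ ⟨s.2, s, hs, rfl⟩).2 hs⟩, rfl⟩
  have hI₂ : Surjective (Prod.snd ∘ I.subtype) := by
    rintro ⟨_, s, hs, rfl⟩
    exact ⟨⟨_, (hI ⟨s.1, s, hs, rfl⟩ ⟨_, s, hs, rfl⟩).2 hs⟩, rfl⟩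
  have := Subgroup.normal_goursatFst hI₁
  have := Subgroup.normal_goursatSnd hI₂
  obtain ⟨e, -⟩ := Subgroup.goursat_surjective hI₁ hI₂
  have hN : ((↑) : B → H) '' I.goursatSnd = Prod.mk (1 : G) ⁻¹' S := by
    ext h
    constructor
    · rintro ⟨b, hb, rfl⟩
      exact (hI 1 b).1 (Subgroup.mem_goursatSnd.1 hb)
    · intro hh
      exact ⟨⟨h, _, hh, rfl⟩, Subgroup.mem_goursatSnd.2 ((hI 1 _).2 hh), rfl⟩
  have hNc : IsClosed (((↑) : B → H) '' I.goursatSnd) :=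
    hN ▸ hS.preimage (continuous_const.prodMk continuous_id)
  have : IsClosed (I.goursatSnd : Set B) := by
    rw [← Subtype.val_injective.preimage_image (I.goursatSnd : Set B)]
    exact hNc.preimage continuous_subtype_val
  have : DiscreteTopology (B ⧸ I.goursatSnd) :=
    ((hG A I.goursatFst).of_mulEquiv_s4 e).discreteTopology
  have hNo : IsOpen (I.goursatSnd : Set B) := QuotientGroup.discreteTopology_iff.1 ‹_›
  show IsClosed (MonoidHom.snd G H '' S)
  rw [← S.coe_map]
  exact Subgroup.isClosed_of_isOpen_of_isClosed_image hNo hNc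

theorem isClosed_of_forall_isClosed_preimage_prodMk {X Y : Type*} [TopologicalSpace X]
    [DiscreteTopology X] [TopologicalSpace Y] {s : Set (X × Y)}
    (h : ∀ x, IsClosed (Prod.mk x ⁻¹' s)) : IsClosed s := by
  refine isOpen_compl_iff.1 (isOpen_iff_mem_nhds.2 ?_)
  rintro ⟨x, y⟩ hxy
  rw [nhds_prod_eq, nhds_discrete, pure_prod]
  exact (h x).isOpen_compl.mem_nhds hxy

theorem CCompact.isClosed_range {G : Type u} [Group G] [TopologicalSpace G] [DiscreteTopology G]
    (hG : CCompact G) (H : Subgroup G) {K : Type u} [Group K] [TopologicalSpace K]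
    [IsTopologicalGroup K] [T2Space K] (f : H →* K) : IsClosed (range f) := by
  let S := (H.subtype.prod f).range
  have hS : IsClosed (S : Set (G × K)) := by
    refine isClosed_of_forall_isClosed_preimage_prodMk fun g => Set.Subsingleton.isClosed ?_
    rintro _ ⟨h₁, hh₁⟩ _ ⟨h₂, hh₂⟩
    simp only [MonoidHom.prod_apply, Subgroup.coe_subtype, Prod.ext_iff] at hh₁ hh₂
    rw [← hh₁.2, ← hh₂.2, Subtype.ext (hh₁.1.trans hh₂.1.symm)]
  convert hG K S hS using 1
  ext k
  simp [S]

/-- A countable base at `1` of a Hausdorff, non-discrete group topology. -/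
structure GroupNhdsSeq (Q : Type*) [Group Q] where
  nhd : ℕ → Set Q
  one_mem_nhd : ∀ k, (1 : Q) ∈ nhd k
  inv_mem_nhd : ∀ k, ∀ v ∈ nhd k, v⁻¹ ∈ nhd k
  mul_mem_nhd : ∀ k, ∀ v ∈ nhd (k + 1), ∀ w ∈ nhd (k + 1), v * w ∈ nhd k
  conj_mem_nhd : ∀ (g : Q) (k : ℕ), ∃ j, ∀ v ∈ nhd j, g * v * g⁻¹ ∈ nhd k
  exists_notMem_nhd : ∀ q : Q, q ≠ 1 → ∃ k, q ∉ nhd k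
  nontrivial_nhd : ∀ k, (nhd k).Nontrivial

namespace GroupNhdsSeq

variable {Q : Type*} [Group Q] (C : GroupNhdsSeq Q)

theorem antitone_nhd : Antitone C.nhd :=
  antitone_nat_of_succ_le fun k v hv => by
    simpa using C.mul_mem_nhd k v hv 1 (C.one_mem_nhd _)

theorem mul_mul_mem_nhd {k : ℕ} {u v w : Q} (hu : u ∈ C.nhd (k + 2)) (hv : v ∈ C.nhd (k + 2))
    (hw : w ∈ C.nhd (k + 2)) : u * v * w ∈ C.nhd k :=
  C.mul_mem_nhd k _ (C.mul_mem_nhd _ _ hu _ hv) _ (C.antitone_nhd (Nat.le_succ _) hw)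

def IsCauchy (x : ℕ → Q) : Prop :=
  ∀ k, ∀ᶠ m in atTop, ∀ᶠ n in atTop, (x m)⁻¹ * x n ∈ C.nhd k ∧ x n * (x m)⁻¹ ∈ C.nhd k

variable {C}

theorem isCauchy_const (q : Q) : C.IsCauchy fun _ => q :=
  fun k => .of_forall fun _ => .of_forall fun _ => by simp [C.one_mem_nhd]

theorem IsCauchy.inv {x : ℕ → Q} (hx : C.IsCauchy x) : C.IsCauchy x⁻¹ := by
  intro k
  filter_upwards [hx k] with m hm
  filter_upwards [hm] with n hn
  exact ⟨by simpa using C.inv_mem_nhd k _ hn.2, by simpa using C.inv_mem_nhd k _ hn.1⟩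

theorem IsCauchy.eventually_conj_mem {x : ℕ → Q} (hx : C.IsCauchy x) (k : ℕ) :
    ∃ j, ∀ᶠ n in atTop, ∀ w ∈ C.nhd j, x n * w * (x n)⁻¹ ∈ C.nhd k := by
  obtain ⟨N, hN⟩ := (hx (k + 2)).exists
  obtain ⟨j, hj⟩ := C.conj_mem_nhd (x N) (k + 2)
  refine ⟨j, hN.mono fun n hn w hw => ?_⟩
  have h : x n * w * (x n)⁻¹ = x n * (x N)⁻¹ * (x N * w * (x N)⁻¹) * (x n * (x N)⁻¹)⁻¹ := by
    group
  rw [h]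
  exact C.mul_mul_mem_nhd hn.2 (hj w hw) (C.inv_mem_nhd _ _ hn.2)

theorem IsCauchy.eventually_inv_conj_mem {x : ℕ → Q} (hx : C.IsCauchy x) (k : ℕ) :
    ∃ j, ∀ᶠ n in atTop, ∀ w ∈ C.nhd j, (x n)⁻¹ * w * x n ∈ C.nhd k := by
  simpa using hx.inv.eventually_conj_mem k

theorem IsCauchy.mul {x y : ℕ → Q} (hx : C.IsCauchy x) (hy : C.IsCauchy y) :
    C.IsCauchy (x * y) := by
  intro k
  obtain ⟨i, hyi⟩ := hy.eventually_inv_conj_mem (k + 1)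
  obtain ⟨j, hxj⟩ := hx.eventually_conj_mem (k + 1)
  filter_upwards [hyi, hx i, hy (k + 1), hy j, hx (k + 1)] with m hym hxi hyk hyj hxk
  filter_upwards [hxj, hxi, hyk, hyj, hxk] with n hxn h₁ h₂ h₃ h₄
  constructor
  · have h : ((x * y) m)⁻¹ * (x * y) n = (y m)⁻¹ * ((x m)⁻¹ * x n) * y m * ((y m)⁻¹ * y n) := by
      simp only [Pi.mul_apply]; group
    rw [h]
    exact C.mul_mem_nhd k _ (hym _ h₁.1) _ h₂.1
  · have h : (x * y) n * ((x * y) m)⁻¹ = x n * (y n * (y m)⁻¹) * (x n)⁻¹ * (x n * (x m)⁻¹) := by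
      simp only [Pi.mul_apply]; group
    rw [h]
    exact C.mul_mem_nhd k _ (hxn _ h₃.2) _ h₄.2

variable (C)

def cauchySubgroup : Subgroup (ℕ → Q) where
  carrier := {x | C.IsCauchy x}
  one_mem' := isCauchy_const 1
  mul_mem' := IsCauchy.mul
  inv_mem' := IsCauchy.inv

def basicNhd (k : ℕ) : Set C.cauchySubgroup :=
  {x | ∀ᶠ n in atTop, (x : ℕ → Q) n ∈ C.nhd k}

abbrev nhdsBasis : GroupFilterBasis C.cauchySubgroup where
  sets := range C.basicNhd
  nonempty := range_nonempty _
  inter_sets := by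
    rintro _ _ ⟨k, rfl⟩ ⟨l, rfl⟩
    refine ⟨_, mem_range_self (max k l), subset_inter ?_ ?_⟩ <;>
      exact fun x hx => hx.mono fun n hn => C.antitone_nhd (by omega) hn
  one' := by
    rintro _ ⟨k, rfl⟩
    exact .of_forall fun _ => C.one_mem_nhd k
  mul' := by
    rintro _ ⟨k, rfl⟩
    refine ⟨_, mem_range_self (k + 1), ?_⟩
    rintro _ ⟨x, hx, y, hy, rfl⟩
    exact (hx.and hy).mono fun n hn => C.mul_mem_nhd k _ hn.1 _ hn.2
  inv' := by
    rintro _ ⟨k, rfl⟩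
    exact ⟨_, mem_range_self k, fun x hx => hx.mono fun n hn => C.inv_mem_nhd k _ hn⟩
  conj' := by
    rintro x₀ _ ⟨k, rfl⟩
    obtain ⟨j, hj⟩ := x₀.2.eventually_conj_mem k
    exact ⟨_, mem_range_self j, fun y hy => (hy.and hj).mono fun n hn => hn.2 _ hn.1⟩

instance : TopologicalSpace C.cauchySubgroup := C.nhdsBasis.topology

instance : IsTopologicalGroup C.cauchySubgroup := C.nhdsBasis.isTopologicalGroup

def Completion : Type _ := SeparationQuotient C.cauchySubgroup

instance : Group C.Completion := inferInstanceAs (Group (SeparationQuotient _))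
instance : TopologicalSpace C.Completion :=
  inferInstanceAs (TopologicalSpace (SeparationQuotient _))
instance : IsTopologicalGroup C.Completion :=
  inferInstanceAs (IsTopologicalGroup (SeparationQuotient _))
instance : T2Space C.Completion := inferInstanceAs (T2Space (SeparationQuotient _))

def constHom : Q →* C.cauchySubgroup where
  toFun q := ⟨fun _ => q, isCauchy_const q⟩
  map_one' := rfl
  map_mul' _ _ := rfl

def toCompletion : Q →* C.Completion := SeparationQuotient.mkMonoidHom.comp C.constHom

theorem mem_closure_range_constHom (x : C.cauchySubgroup) : x ∈ closure (range C.constHom) := by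
  refine (mem_closure_iff_nhds_basis' (C.nhdsBasis.nhds_hasBasis x)).2 ?_
  rintro _ ⟨k, rfl⟩
  obtain ⟨N, hN⟩ := (x.2 k).exists
  refine ⟨C.constHom (x.1 N), ⟨x⁻¹ * C.constHom (x.1 N), hN.mono fun n hn => ?_,
    mul_inv_cancel_left _ _⟩, mem_range_self _⟩
  simpa [constHom] using C.inv_mem_nhd k _ hn.1

theorem exists_diagonal_step (a q : Q) (m k : ℕ) :
    ∃ u ∈ C.nhd (m + 2), ∃ m', m + 2 ≤ m' ∧
      (∀ w ∈ C.nhd m', a * u * w * (a * u)⁻¹ ∈ C.nhd k) ∧ (a * u)⁻¹ * q ∉ C.nhd m' := by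
  obtain ⟨u, hu, hne⟩ := (C.nontrivial_nhd (m + 2)).exists_ne (a⁻¹ * q)
  obtain ⟨l, hl⟩ := C.exists_notMem_nhd ((a * u)⁻¹ * q)
    fun h => hne (eq_inv_mul_of_mul_eq (inv_mul_eq_one.1 h))
  obtain ⟨j, hj⟩ := C.conj_mem_nhd (a * u) k
  exact ⟨u, hu, max (m + 2) (max l j), le_max_left _ _,
    fun w hw => hj w (C.antitone_nhd (by omega) hw), fun h => hl (C.antitone_nhd (by omega) h)⟩

section Diagonal

variable {C} {a : ℕ → Q} {m : ℕ → ℕ}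

theorem inv_mul_mem_nhd_of_le (hstep : ∀ n, (a n)⁻¹ * a (n + 1) ∈ C.nhd (m n + 2))
    (hm : ∀ n, m n + 2 ≤ m (n + 1)) {i n : ℕ} (hin : i ≤ n) : (a i)⁻¹ * a n ∈ C.nhd (m i + 1) := by
  induction hin using Nat.decreasingInduction with
  | self => simpa using C.one_mem_nhd _
  | of_succ i _ ih =>
    have h : (a i)⁻¹ * a n = (a i)⁻¹ * a (i + 1) * ((a (i + 1))⁻¹ * a n) := by group
    rw [h]
    exact C.mul_mem_nhd _ _ (hstep i) _ (C.antitone_nhd (by have := hm i; omega) ih)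

theorem isCauchy_of_inv_mul_mem_nhd (hstep : ∀ n, (a n)⁻¹ * a (n + 1) ∈ C.nhd (m n + 2))
    (hm : ∀ n, m n + 2 ≤ m (n + 1))
    (hconj : ∀ n, ∀ w ∈ C.nhd (m (n + 1)), a (n + 1) * w * (a (n + 1))⁻¹ ∈ C.nhd n) :
    C.IsCauchy a := by
  have hm_ge : ∀ n, n ≤ m n := (strictMono_nat_of_lt_succ fun n => by have := hm n; omega).id_le
  intro k
  filter_upwards [eventually_ge_atTop (k + 1)] with i hi
  filter_upwards [eventually_ge_atTop i] with n hn
  have hin := inv_mul_mem_nhd_of_le hstep hm hn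
  refine ⟨C.antitone_nhd (by have := hm_ge i; omega) hin, ?_⟩
  obtain ⟨j, rfl⟩ : ∃ j, i = j + 1 := ⟨i - 1, by omega⟩
  have h : a n * (a (j + 1))⁻¹ = a (j + 1) * ((a (j + 1))⁻¹ * a n) * (a (j + 1))⁻¹ := by group
  rw [h]
  exact C.antitone_nhd (by omega) (hconj j _ (C.antitone_nhd (Nat.le_succ _) hin))

theorem not_eventually_inv_mul_mem_nhd (hstep : ∀ n, (a n)⁻¹ * a (n + 1) ∈ C.nhd (m n + 2))
    (hm : ∀ n, m n + 2 ≤ m (n + 1)) {j : ℕ} {q : Q} (hq : (a j)⁻¹ * q ∉ C.nhd (m j)) :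
    ¬∀ᶠ n in atTop, q⁻¹ * a n ∈ C.nhd (m j + 1) := fun hev => by
  obtain ⟨n, hqn, hjn⟩ := (hev.and (eventually_ge_atTop j)).exists
  have h : (a j)⁻¹ * q = (a j)⁻¹ * a n * (q⁻¹ * a n)⁻¹ := by group
  exact hq (h ▸ C.mul_mem_nhd _ _ (inv_mul_mem_nhd_of_le hstep hm hjn) _ (C.inv_mem_nhd _ _ hqn))

end Diagonal

theorem exists_isCauchy_forall_not_eventually [Countable Q] :
    ∃ a : ℕ → Q, C.IsCauchy a ∧ ∀ q : Q, ∃ k, ¬∀ᶠ n in atTop, q⁻¹ * a n ∈ C.nhd k := by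
  obtain ⟨e, he⟩ := exists_surjective_nat Q
  choose u hu m' hm' hconj hfar using
    fun (p : Q × ℕ) (k : ℕ) => C.exists_diagonal_step p.1 (e k) p.2 k
  let seq : ℕ → Q × ℕ := fun n => Nat.rec (1, 0) (fun k p => (p.1 * u p k, m' p k)) n
  have hstep : ∀ n, ((seq n).1)⁻¹ * (seq (n + 1)).1 ∈ C.nhd ((seq n).2 + 2) := fun n => by
    simpa [seq] using hu (seq n) n
  refine ⟨fun n => (seq n).1,
    isCauchy_of_inv_mul_mem_nhd hstep (fun n => hm' (seq n) n) (fun n => hconj (seq n) n),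
    fun q => ?_⟩
  obtain ⟨i, rfl⟩ := he q
  exact ⟨_, not_eventually_inv_mul_mem_nhd (j := i + 1) hstep (fun n => hm' (seq n) n)
    (hfar (seq i) i)⟩

theorem not_isClosed_range_toCompletion [Countable Q] : ¬IsClosed (range C.toCompletion) := by
  intro hclosed
  replace hclosed : IsClosed (SeparationQuotient.mk '' range C.constHom) := by
    rwa [← range_comp]
  obtain ⟨a, ha, hfar⟩ := C.exists_isCauchy_forall_not_eventually
  obtain ⟨_, ⟨q, rfl⟩, hq⟩ := hclosed.closure_subset <|
    mem_closure_image SeparationQuotient.continuous_mk.continuousAt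
      (C.mem_closure_range_constHom ⟨a, ha⟩)
  obtain ⟨k, hk⟩ := hfar q
  have hnhds : (C.constHom q * ·) '' C.basicNhd k ∈ 𝓝 (⟨a, ha⟩ : C.cauchySubgroup) :=
    (SeparationQuotient.mk_eq_mk.1 hq).nhds_eq ▸
      (C.nhdsBasis.nhds_hasBasis _).mem_of_mem (mem_range_self k)
  obtain ⟨y, hy, hya⟩ := mem_of_mem_nhds hnhds
  refine hk (hy.mono fun n hn => ?_)
  have hyn : q * y.1 n = a n := congrFun (congrArg Subtype.val hya) n
  rwa [← eq_inv_mul_of_mul_eq hyn]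

end GroupNhdsSeq

section Construction

variable {Q : Type*} [Group Q] [TopologicalSpace Q] [IsTopologicalGroup Q]

theorem exists_nhds_one_step [T1Space Q] {W : Set Q} (hW : W ∈ 𝓝 (1 : Q)) (F : Finset Q) :
    ∃ V ∈ 𝓝 (1 : Q), (∀ v ∈ V, v⁻¹ ∈ V) ∧ (∀ v ∈ V, ∀ w ∈ V, v * w ∈ W) ∧
      (∀ g ∈ F, ∀ v ∈ V, g * v * g⁻¹ ∈ W) ∧ ∀ g ∈ F, g ≠ 1 → g ∉ V := by
  obtain ⟨V₁, hV₁, hV₁W⟩ := exists_nhds_one_split hW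
  have hconj (g : Q) : ∀ᶠ v in 𝓝 (1 : Q), g * v * g⁻¹ ∈ W :=
    ((continuous_const.mul continuous_id).mul continuous_const).tendsto' 1 1 (by simp) hW
  have hne (g : Q) : ∀ᶠ v in 𝓝 (1 : Q), g ≠ 1 → v ≠ g := by
    by_cases hg : g = 1
    · simp [hg]
    · exact (eventually_ne_nhds (Ne.symm hg)).mono fun v hv _ => hv
  let V₂ := {v | v ∈ V₁ ∧ (∀ g ∈ F, g * v * g⁻¹ ∈ W) ∧ ∀ g ∈ F, g ≠ 1 → v ≠ g}
  have hV₂ : V₂ ∈ 𝓝 (1 : Q) :=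
    inter_mem hV₁ (((eventually_all_finset F).2 fun g _ => hconj g).and
      ((eventually_all_finset F).2 fun g _ => hne g))
  refine ⟨V₂ ∩ V₂⁻¹, inter_mem hV₂ (inv_mem_nhds_one Q hV₂),
    fun v hv => ⟨hv.2, by simpa using hv.1⟩, fun v hv w hw => hV₁W v hv.1.1 w hw.1.1,
    fun g hg v hv => hv.1.2.1 g hg, fun g hg hg1 hv => hv.1.2.2 g hg hg1 rfl⟩

theorem nontrivial_of_mem_nhds_one (hQ : ¬DiscreteTopology Q) {s : Set Q} (hs : s ∈ 𝓝 (1 : Q)) :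
    s.Nontrivial := by
  by_contra h
  rw [not_nontrivial_iff] at h
  rw [h.eq_singleton_of_mem (mem_of_mem_nhds hs)] at hs
  exact hQ (discreteTopology_of_isOpen_singleton_one ((isOpen_singleton_iff_nhds_eq_pure 1).2
    (le_antisymm (le_pure_iff.2 hs) (pure_le_nhds 1))))

theorem exists_groupNhdsSeq [T1Space Q] [Countable Q] (hQ : ¬DiscreteTopology Q) :
    Nonempty (GroupNhdsSeq Q) := by
  classical
  obtain ⟨e, he⟩ := exists_surjective_nat Q
  choose! next hnext hinv hmul hconj hsep using
    fun (W : Set Q) (hW : W ∈ 𝓝 (1 : Q)) (n : ℕ) =>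
      exists_nhds_one_step hW ((Finset.range (n + 1)).image e)
  let U : ℕ → Set Q := fun n => Nat.rec univ (fun k W => next W k) n
  have hU : ∀ n, U n ∈ 𝓝 (1 : Q) := by
    intro n
    induction n with
    | zero => exact univ_mem
    | succ k ih => exact hnext _ ih k
  have hanti : Antitone U := antitone_nat_of_succ_le fun k v hv => by
    simpa using hmul _ (hU k) k v hv 1 (mem_of_mem_nhds (hU (k + 1)))
  refine ⟨{ nhd := U,
             one_mem_nhd := fun k => mem_of_mem_nhds (hU k),
             inv_mem_nhd := ?_,
             mul_mem_nhd := fun k => hmul _ (hU k) k,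
             conj_mem_nhd := ?_,
             exists_notMem_nhd := ?_,
             nontrivial_nhd := fun k => nontrivial_of_mem_nhds_one hQ (hU k) }⟩
  · rintro (_ | k)
    · simp [U]
    · exact hinv _ (hU k) k
  · intro g k
    obtain ⟨i, rfl⟩ := he g
    refine ⟨max i k + 1, fun v hv => hanti (le_max_right i k) ?_⟩
    exact hconj _ (hU _) _ (e i) (Finset.mem_image_of_mem e (by simp)) v hv
  · intro q hq
    obtain ⟨n, rfl⟩ := he q
    exact ⟨n + 1, hsep _ (hU n) n (e n) (Finset.mem_image_of_mem e (by simp)) hq⟩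

end Construction

theorem CCompact.hereditarilyNonTopologizable {G : Type u} [Group G] [Countable G]
    [TopologicalSpace G] [DiscreteTopology G] (hG : CCompact G) :
    HereditarilyNonTopologizable G := by
  intro H N _ t _ _
  by_contra hne
  have : Countable (H ⧸ N) := QuotientGroup.mk_surjective.countable
  obtain ⟨C⟩ := exists_groupNhdsSeq (Q := H ⧸ N) fun h => hne h.eq_bot
  refine C.not_isClosed_range_toCompletion ?_
  rw [← (QuotientGroup.mk'_surjective N).range_comp]
  exact hG.isClosed_range H (C.toCompletion.comp (QuotientGroup.mk' N))

theorem countable_discrete_cCompact_iff_hereditarilyNonTopologizable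
    {G : Type u} [Group G] [Countable G] [TopologicalSpace G] [DiscreteTopology G] :
    CCompact G ↔ HereditarilyNonTopologizable G :=
  ⟨CCompact.hereditarilyNonTopologizable, CCompact.of_hereditarilyNonTopologizable⟩
end

section
/- A countable group G is non-topologizable if and only if the identity e is algebraically isolated in G. -/
structure Monomial (G : Type*) [Group G] where
  head : G
  tail : List (ℤ × G)

def Monomial.eval {G : Type*} [Group G] (f : Monomial G) (g : G) : G :=
  f.head * (f.tail.map fun p => g ^ p.1 * p.2).prod

def AlgebraicallyIsolated (G : Type*) [Group G] : Prop :=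
  ∃ fs : List (Monomial G), {g : G | g ≠ 1} = {g : G | ∃ f ∈ fs, f.eval g = 1}

/-!
If `1` is algebraically isolated, then in any group topology every monomial is continuous, so
`{1}`, the complement of finitely many closed zero sets, is open and the topology is discrete.

Conversely (Markov), enumerate `G = {e 0, e 1, …}` and choose `x 0, x 1, … ≠ 1` one at a time.
The basic neighbourhoods of `1` are the sets `U n` of products of conjugates `c * x i ^ (±1) * c⁻¹`
with `∑ 2⁻¹ ^ i ≤ 2⁻¹ ^ n`, `n ≤ i`, and `c` a product of at most `i - n` of `e 0, …, e i`.
They form a group filter basis, and `x n ∈ U n` makes the topology non-discrete. It is Hausdorff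
as soon as `e m ∉ U (m + 1)` whenever `e m ≠ 1`. Only finitely many such words have all indices
`≤ j`; replacing `x j` in them by a variable gives finitely many monomials, which by induction on
`j` do not vanish at `1`. Since `1` is not algebraically isolated, some `x j ≠ 1` is a zero of
none of them, and this propagates the induction.
-/

open Function Set

namespace Monomial

variable {G : Type*} [Group G]

def const (a : G) : Monomial G := ⟨a, []⟩

def varZPow (k : ℤ) : Monomial G := ⟨1, [(k, 1)]⟩

instance : Mul (Monomial G) := ⟨fun f f' => ⟨f.head, f.tail ++ (0, f'.head) :: f'.tail⟩⟩

@[simp] lemma eval_const (a g : G) : (const a).eval g = a := by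
  simp [const, eval]

@[simp] lemma eval_varZPow (k : ℤ) (g : G) : (varZPow k).eval g = g ^ k := by
  simp [varZPow, eval]

@[simp] lemma eval_mul (f f' : Monomial G) (g : G) : (f * f').eval g = f.eval g * f'.eval g := by
  show f.head * ((f.tail ++ (0, f'.head) :: f'.tail).map _).prod = _
  simp [eval, mul_assoc]

lemma continuous_eval [TopologicalSpace G] [IsTopologicalGroup G] (f : Monomial G) :
    Continuous f.eval :=
  continuous_const.mul <| continuous_list_prod _ fun p _ =>
    (continuous_zpow p.1).mul continuous_const

end Monomial

theorem AlgebraicallyIsolated.nonTopologizable {G : Type*} [Group G]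
    (h : AlgebraicallyIsolated G) : NonTopologizable G := by
  obtain ⟨fs, hfs⟩ := h
  intro t _ _
  have hclosed : IsClosed {g : G | ∃ f ∈ fs, f.eval g = 1} := by
    convert fs.finite_toSet.isClosed_biUnion
      fun f _ => (isClosed_singleton (x := 1)).preimage f.continuous_eval using 1
    ext g
    simp
  have : DiscreteTopology G := discreteTopology_of_isOpen_singleton_one <| by
    simpa [← hfs] using hclosed.isOpen_compl
  exact DiscreteTopology.eq_bot

theorem exists_ne_one_forall_eval_ne_one {G : Type*} [Group G] (h : ¬AlgebraicallyIsolated G)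
    {S : Set (Monomial G)} (hS : S.Finite) : ∃ g ≠ 1, ∀ f ∈ S, f.eval 1 ≠ 1 → f.eval g ≠ 1 := by
  by_contra! hc
  refine h ⟨(hS.inter_of_left {f | f.eval 1 ≠ 1}).toFinset.toList, ?_⟩
  ext g
  simp only [Finset.mem_toList, Finite.mem_toFinset, mem_inter_iff]
  refine ⟨fun hg => ?_, ?_⟩
  · obtain ⟨f, hf, hf1, hfg⟩ := hc g hg
    exact ⟨f, ⟨hf, hf1⟩, hfg⟩
  · rintro ⟨f, ⟨-, hf1⟩, hfg⟩ rfl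
    exact hf1 hfg

def strongRecSeq {α : Type*} (a : α) (pick : ℕ → (ℕ → α) → α) (j : ℕ) : α :=
  pick j fun i => if i < j then strongRecSeq a pick i else a

theorem exists_seq_forall_prefix {α : Type*} (a : α) {P : ℕ → (ℕ → α) → α → Prop}
    (h : ∀ j y, ∃ b, P j y b) : ∃ x : ℕ → α, ∀ j, P j (fun i => if i < j then x i else a) (x j) := by
  choose pick hpick using h
  refine ⟨strongRecSeq a pick, fun j => ?_⟩
  rw [strongRecSeq]
  exact hpick _ _

lemma Set.Finite.finite_lists_length_le {α : Type*} {s : Set α} (hs : s.Finite) (n : ℕ) :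
    {l : List α | l.length ≤ n ∧ ∀ a ∈ l, a ∈ s}.Finite := by
  have := hs.to_subtype
  refine ((List.finite_length_le s n).image (List.map Subtype.val)).subset ?_
  rintro l ⟨hl, hls⟩
  lift l to List s using hls
  exact ⟨l, by simpa using hl, rfl⟩

namespace Markov

structure Factor (G : Type*) where
  conj : G
  index : ℕ
  sign : ℤˣ

namespace Factor

variable {G : Type*}

def inv (p : Factor G) : Factor G := { p with sign := -p.sign }

@[simp] lemma index_inv (p : Factor G) : p.inv.index = p.index := rfl

@[simp] lemma conj_inv (p : Factor G) : p.inv.conj = p.conj := rfl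

def conjBy [Mul G] (c : G) (p : Factor G) : Factor G := { p with conj := c * p.conj }

@[simp] lemma index_conjBy [Mul G] (c : G) (p : Factor G) : (p.conjBy c).index = p.index := rfl

@[simp] lemma conj_conjBy [Mul G] (c : G) (p : Factor G) : (p.conjBy c).conj = c * p.conj := rfl

variable [Group G]

def eval (x : ℕ → G) (p : Factor G) : G := p.conj * x p.index ^ (p.sign : ℤ) * p.conj⁻¹

lemma eval_inv (x : ℕ → G) (p : Factor G) : p.inv.eval x = (p.eval x)⁻¹ := by
  simp [eval, inv, mul_assoc]

lemma eval_conjBy (x : ℕ → G) (c : G) (p : Factor G) :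
    (p.conjBy c).eval x = MulAut.conj c (p.eval x) := by
  simp [eval, conjBy, mul_assoc]

end Factor

section Words

variable {G : Type*}

def weight (L : List (Factor G)) : ℚ := (L.map fun p => (2⁻¹ : ℚ) ^ p.index).sum

lemma weight_append (L₁ L₂ : List (Factor G)) : weight (L₁ ++ L₂) = weight L₁ + weight L₂ := by
  simp [weight]

lemma weight_reverse (L : List (Factor G)) : weight L.reverse = weight L := by
  simp [weight]

lemma weight_map {f : Factor G → Factor G} (hf : ∀ p, (f p).index = p.index)
    (L : List (Factor G)) : weight (L.map f) = weight L := by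
  simp [weight, Function.comp_def, hf]

lemma weight_le_of_sublist {L L' : List (Factor G)} (hs : L'.Sublist L) : weight L' ≤ weight L :=
  (hs.map _).sum_le_sum fun _ ha => by
    obtain ⟨p, -, rfl⟩ := List.mem_map.1 ha
    positivity

variable [Group G]

def evalProd (x : ℕ → G) (L : List (Factor G)) : G := (L.map (Factor.eval x)).prod

lemma evalProd_append (x : ℕ → G) (L₁ L₂ : List (Factor G)) :
    evalProd x (L₁ ++ L₂) = evalProd x L₁ * evalProd x L₂ := by
  simp [evalProd]

lemma evalProd_reverse_map_inv (x : ℕ → G) (L : List (Factor G)) :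
    evalProd x (L.map Factor.inv).reverse = (evalProd x L)⁻¹ := by
  simp [evalProd, List.prod_inv_reverse, Function.comp_def, Factor.eval_inv]

lemma evalProd_map_conjBy (x : ℕ → G) (c : G) (L : List (Factor G)) :
    evalProd x (L.map (Factor.conjBy c)) = c * evalProd x L * c⁻¹ := by
  have : Factor.eval x ∘ Factor.conjBy c = MulAut.conj c ∘ Factor.eval x :=
    funext (Factor.eval_conjBy x c)
  rw [evalProd, List.map_map, this, ← List.map_map, ← map_list_prod]
  exact MulAut.conj_apply c _

lemma evalProd_congr {x y : ℕ → G} {L : List (Factor G)} (h : ∀ p ∈ L, x p.index = y p.index) :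
    evalProd x L = evalProd y L :=
  congrArg List.prod <| List.map_congr_left fun p hp => by simp [Factor.eval, h p hp]

lemma evalProd_update_one (x : ℕ → G) (j : ℕ) (L : List (Factor G)) :
    evalProd (update x j 1) L = evalProd x (L.filter (·.index ≠ j)) := by
  induction L with
  | nil => rfl
  | cons p L ih =>
    by_cases hp : p.index = j <;> simpa [evalProd, hp, Factor.eval] using ih

open Monomial in
def Factor.toMonomial (y : ℕ → G) (j : ℕ) (p : Factor G) : Monomial G :=
  const p.conj * (if p.index = j then varZPow p.sign else const (y p.index ^ (p.sign : ℤ))) *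
    const p.conj⁻¹

lemma Factor.eval_toMonomial (y : ℕ → G) (j : ℕ) (p : Factor G) (g : G) :
    (p.toMonomial y j).eval g = p.eval (update y j g) := by
  unfold toMonomial Factor.eval
  split_ifs with h <;> simp [h]

def wordMonomial (y : ℕ → G) (j : ℕ) (L : List (Factor G)) : Monomial G :=
  L.foldr (fun p f => p.toMonomial y j * f) (Monomial.const 1)

lemma eval_wordMonomial (y : ℕ → G) (j : ℕ) (L : List (Factor G)) (g : G) :
    (wordMonomial y j L).eval g = evalProd (update y j g) L := by
  induction L with
  | nil => simp [wordMonomial, evalProd]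
  | cons p L ih =>
    rw [wordMonomial, List.foldr_cons, Monomial.eval_mul, Factor.eval_toMonomial, ← wordMonomial, ih]
    simp [evalProd]

end Words

section Admissible

variable {G : Type*} [Monoid G] (e : ℕ → G)

def boundedProducts (r i : ℕ) : Set G :=
  {c | ∃ l : List ℕ, l.length ≤ r ∧ (∀ k ∈ l, k ≤ i) ∧ (l.map e).prod = c}

lemma one_mem_boundedProducts (r i : ℕ) : (1 : G) ∈ boundedProducts e r i :=
  ⟨[], by simp, by simp, rfl⟩

lemma mul_mem_boundedProducts {r i k : ℕ} {c : G} (hk : k ≤ i)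
    (hc : c ∈ boundedProducts e r i) : e k * c ∈ boundedProducts e (r + 1) i := by
  obtain ⟨l, hl, hli, rfl⟩ := hc
  exact ⟨k :: l, by simpa using hl, by simpa [hk] using hli, by simp⟩

lemma boundedProducts_mono {r r' i i' : ℕ} (hr : r ≤ r') (hi : i ≤ i') :
    boundedProducts e r i ⊆ boundedProducts e r' i' := by
  rintro _ ⟨l, hl, hli, rfl⟩
  exact ⟨l, hl.trans hr, fun k hk => (hli k hk).trans hi, rfl⟩

lemma boundedProducts_finite (r i : ℕ) : (boundedProducts e r i).Finite := by
  refine (((finite_Iic i).finite_lists_length_le r).image fun l => (l.map e).prod).subset ?_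
  rintro _ ⟨l, hl, hli, rfl⟩
  exact ⟨l, ⟨hl, hli⟩, rfl⟩

/-- The weight bound gives `U (n + 1) * U (n + 1) ⊆ U n` and bounds the length of words with
small indices; the conjugators may grow with the index, which leaves room for conjugation by
`e k`, but only through finitely many values per index. -/
def IsAdmissible (n : ℕ) (L : List (Factor G)) : Prop :=
  weight L ≤ 2⁻¹ ^ n ∧ ∀ p ∈ L, n ≤ p.index ∧ p.conj ∈ boundedProducts e (p.index - n) p.index

lemma isAdmissible_nil (n : ℕ) : IsAdmissible e n [] :=
  ⟨by simp [weight], by simp⟩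

lemma isAdmissible_singleton (n : ℕ) : IsAdmissible e n [⟨1, n, 1⟩] :=
  ⟨by simp [weight], by simp [one_mem_boundedProducts]⟩

namespace IsAdmissible

variable {e}

lemma mono {n n' : ℕ} {L : List (Factor G)} (h : IsAdmissible e n' L) (hn : n ≤ n') :
    IsAdmissible e n L :=
  ⟨h.1.trans (pow_le_pow_of_le_one (by norm_num) (by norm_num) hn), fun p hp =>
    ⟨hn.trans (h.2 p hp).1, boundedProducts_mono e (by omega) le_rfl (h.2 p hp).2⟩⟩

lemma append {n : ℕ} {L₁ L₂ : List (Factor G)} (h₁ : IsAdmissible e (n + 1) L₁)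
    (h₂ : IsAdmissible e (n + 1) L₂) : IsAdmissible e n (L₁ ++ L₂) := by
  refine ⟨?_, ?_⟩
  · calc weight (L₁ ++ L₂) = weight L₁ + weight L₂ := weight_append L₁ L₂
      _ ≤ 2⁻¹ ^ (n + 1) + 2⁻¹ ^ (n + 1) := add_le_add h₁.1 h₂.1
      _ = 2⁻¹ ^ n := by ring
  · simp only [List.mem_append]
    rintro p (hp | hp)
    exacts [(h₁.mono n.le_succ).2 p hp, (h₂.mono n.le_succ).2 p hp]

lemma reverse_map_inv {n : ℕ} {L : List (Factor G)} (h : IsAdmissible e n L) :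
    IsAdmissible e n (L.map Factor.inv).reverse :=
  ⟨by rw [weight_reverse, weight_map Factor.index_inv]; exact h.1, by simpa using h.2⟩

lemma map_conjBy {n k M : ℕ} {L : List (Factor G)} (hk : k ≤ M) (hn : n ≤ M)
    (h : IsAdmissible e (M + 1) L) : IsAdmissible e n (L.map (Factor.conjBy (e k))) := by
  refine ⟨by rw [weight_map (Factor.index_conjBy (e k))]; exact (h.mono (by omega)).1, ?_⟩
  simp only [List.mem_map]
  rintro _ ⟨p, hp, rfl⟩
  obtain ⟨hpi, hpc⟩ := h.2 p hp
  simp only [Factor.index_conjBy, Factor.conj_conjBy]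
  exact ⟨by omega,
    boundedProducts_mono e (by omega) le_rfl (mul_mem_boundedProducts e (by omega) hpc)⟩

lemma sublist {n : ℕ} {L L' : List (Factor G)} (h : IsAdmissible e n L) (hs : L'.Sublist L) :
    IsAdmissible e n L' :=
  ⟨(weight_le_of_sublist hs).trans h.1, fun p hp => h.2 p (hs.mem hp)⟩

lemma length_le {n j : ℕ} {L : List (Factor G)} (h : IsAdmissible e n L)
    (hj : ∀ p ∈ L, p.index ≤ j) : L.length ≤ 2 ^ j := by
  have : (L.length : ℚ) * 2⁻¹ ^ j ≤ 1 :=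
    calc (L.length : ℚ) * 2⁻¹ ^ j = (L.map fun _ => (2⁻¹ : ℚ) ^ j).sum := by simp
      _ ≤ weight L := List.sum_le_sum fun p hp =>
          pow_le_pow_of_le_one (by norm_num) (by norm_num) (hj p hp)
      _ ≤ 2⁻¹ ^ n := h.1
      _ ≤ 1 := pow_le_one₀ (by norm_num) (by norm_num)
  rw [inv_pow, ← div_eq_mul_inv, div_le_one (by positivity)] at this
  exact_mod_cast this

end IsAdmissible

end Admissible

section Construction

variable {G : Type*} [Group G] (e : ℕ → G)

def boundedFactors (j : ℕ) : Set (Factor G) :=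
  {p | p.index ≤ j ∧ p.conj ∈ boundedProducts e j j}

def candidates (j : ℕ) : Set (List (Factor G)) :=
  {L | L.length ≤ 2 ^ j ∧ ∀ p ∈ L, p ∈ boundedFactors e j}

lemma boundedFactors_finite (j : ℕ) : (boundedFactors e j).Finite := by
  refine (((boundedProducts_finite e j j).prod ((finite_Iic j).prod finite_univ)).image
    fun q : G × ℕ × ℤˣ => (⟨q.1, q.2.1, q.2.2⟩ : Factor G)).subset ?_
  rintro ⟨c, i, s⟩ ⟨hi, hc⟩
  exact ⟨(c, i, s), ⟨hc, hi, trivial⟩, rfl⟩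

lemma candidates_finite (j : ℕ) : (candidates e j).Finite :=
  (boundedFactors_finite e j).finite_lists_length_le _

lemma IsAdmissible.mem_candidates {n j : ℕ} {L : List (Factor G)} (h : IsAdmissible e n L)
    (hj : ∀ p ∈ L, p.index ≤ j) : L ∈ candidates e j :=
  ⟨h.length_le hj, fun p hp =>
    ⟨hj p hp, boundedProducts_mono e (by have := hj p hp; omega) (hj p hp) (h.2 p hp).2⟩⟩

def obstructions (y : ℕ → G) (j : ℕ) : Set (Monomial G) :=
  (fun Lm : List (Factor G) × ℕ => wordMonomial y j Lm.1 * Monomial.const (e Lm.2)⁻¹) ''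
    (candidates e j ×ˢ Iio j)

lemma obstructions_finite (y : ℕ → G) (j : ℕ) : (obstructions e y j).Finite :=
  ((candidates_finite e j).prod (finite_Iio j)).image _

def nbhd (x : ℕ → G) (n : ℕ) : Set G := evalProd x '' {L | IsAdmissible e n L}

lemma nbhd_antitone (x : ℕ → G) : Antitone (nbhd e x) :=
  fun _ _ hn => image_mono fun _ hL => IsAdmissible.mono hL hn

lemma apply_mem_nbhd (x : ℕ → G) (n : ℕ) : x n ∈ nbhd e x n :=
  ⟨[⟨1, n, 1⟩], isAdmissible_singleton e n, by simp [evalProd, Factor.eval]⟩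

abbrev admissibleFilterBasis (x : ℕ → G) (he : Surjective e) : GroupFilterBasis G where
  sets := range (nbhd e x)
  nonempty := range_nonempty _
  inter_sets := by
    rintro _ _ ⟨n, rfl⟩ ⟨n', rfl⟩
    exact ⟨_, mem_range_self (max n n'), subset_inter (nbhd_antitone e x (le_max_left n n'))
      (nbhd_antitone e x (le_max_right n n'))⟩
  one' := by
    rintro _ ⟨n, rfl⟩
    exact ⟨[], isAdmissible_nil e n, rfl⟩
  mul' := by
    rintro _ ⟨n, rfl⟩
    refine ⟨_, mem_range_self (n + 1), ?_⟩
    rintro _ ⟨_, ⟨L₁, h₁, rfl⟩, _, ⟨L₂, h₂, rfl⟩, rfl⟩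
    exact ⟨L₁ ++ L₂, h₁.append h₂, evalProd_append x L₁ L₂⟩
  inv' := by
    rintro _ ⟨n, rfl⟩
    refine ⟨_, mem_range_self n, ?_⟩
    rintro _ ⟨L, hL, rfl⟩
    exact ⟨_, hL.reverse_map_inv, evalProd_reverse_map_inv x L⟩
  conj' := by
    rintro g _ ⟨n, rfl⟩
    obtain ⟨k, rfl⟩ := he g
    refine ⟨_, mem_range_self (max n k + 1), ?_⟩
    rintro _ ⟨L, hL, rfl⟩
    exact ⟨_, hL.map_conjBy (le_max_right n k) (le_max_left n k), evalProd_map_conjBy x (e k) L⟩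

variable {e}

lemma evalProd_ne_of_filter_ne {x : ℕ → G} {j m : ℕ}
    (hxj : ∀ f ∈ obstructions e (fun i => if i < j then x i else 1) j,
      f.eval 1 ≠ 1 → f.eval (x j) ≠ 1)
    (hmj : m < j) {L : List (Factor G)} (hL : IsAdmissible e (m + 1) L)
    (hj : ∀ p ∈ L, p.index ≤ j) (hfilter : evalProd x (L.filter (·.index ≠ j)) ≠ e m) :
    evalProd x L ≠ e m := by
  set y : ℕ → G := fun i => if i < j then x i else 1
  have hy : ∀ i < j, y i = x i := fun i hi => if_pos hi
  set f := wordMonomial y j L * Monomial.const (e m)⁻¹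
  have hf : f ∈ obstructions e y j := ⟨(L, m), ⟨hL.mem_candidates e hj, hmj⟩, rfl⟩
  have heval : ∀ g, f.eval g = evalProd (update y j g) L * (e m)⁻¹ := fun g => by
    simp [f, eval_wordMonomial]
  have h1 : f.eval 1 ≠ 1 := by
    rw [heval, Ne, mul_inv_eq_one, evalProd_update_one, evalProd_congr fun p hp => hy _ ?_]
    · exact hfilter
    · simp only [List.mem_filter, decide_eq_true_eq] at hp
      have := hj p hp.1
      omega
  have hupdate : evalProd (update y j (x j)) L = evalProd x L :=
    evalProd_congr fun p hp => by
      rcases (hj p hp).lt_or_eq with h | h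
      · rw [update_of_ne h.ne, hy _ h]
      · rw [h, update_self]
  intro hLm
  exact hxj f hf h1 (by rw [heval, hupdate, hLm, mul_inv_cancel])

theorem evalProd_ne_of_isAdmissible {x : ℕ → G}
    (hx : ∀ j, ∀ f ∈ obstructions e (fun i => if i < j then x i else 1) j,
      f.eval 1 ≠ 1 → f.eval (x j) ≠ 1)
    {m : ℕ} (hm : e m ≠ 1) {L : List (Factor G)} (hL : IsAdmissible e (m + 1) L) :
    evalProd x L ≠ e m := by
  suffices key : ∀ j (L : List (Factor G)), IsAdmissible e (m + 1) L →
      (∀ p ∈ L, p.index < j) → evalProd x L ≠ e m by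
    obtain ⟨N, hN⟩ := (L.finite_toSet.image Factor.index).bddAbove
    exact key (N + 1) L hL fun p hp => Nat.lt_succ_of_le (hN (mem_image_of_mem _ hp))
  intro j
  induction j with
  | zero =>
    intro L _ hj
    rw [List.eq_nil_iff_forall_not_mem.2 fun p hp => Nat.not_lt_zero _ (hj p hp)]
    exact fun h => hm h.symm
  | succ j ih =>
    intro L hL hj
    rcases eq_or_ne L [] with rfl | hnil
    · exact fun h => hm h.symm
    obtain ⟨p₀, hp₀⟩ := L.exists_mem_of_ne_nil hnil
    have hmj : m < j := by
      have := (hL.2 p₀ hp₀).1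
      have := hj p₀ hp₀
      omega
    refine evalProd_ne_of_filter_ne (hx j) hmj hL (fun p hp => Nat.lt_succ_iff.1 (hj p hp)) <|
      ih _ (hL.sublist List.filter_sublist) fun p hp => ?_
    simp only [List.mem_filter, decide_eq_true_eq] at hp
    have := hj p hp.1
    omega

end Construction

end Markov

theorem not_nonTopologizable_of_not_algebraicallyIsolated {G : Type*} [Group G] [Countable G]
    (h : ¬AlgebraicallyIsolated G) : ¬NonTopologizable G := by
  obtain ⟨e, he⟩ := exists_surjective_nat G
  obtain ⟨x, hx⟩ := exists_seq_forall_prefix (1 : G)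
    fun j y => exists_ne_one_forall_eval_ne_one h (Markov.obstructions_finite e y j)
  let B := Markov.admissibleFilterBasis e x he
  let _ := B.topology
  have := B.isTopologicalGroup
  have hT2 : T2Space G := IsTopologicalGroup.t2Space_of_one_sep fun g hg => by
    obtain ⟨m, rfl⟩ := he g
    refine ⟨Markov.nbhd e x (m + 1), B.mem_nhds_one (mem_range_self _), ?_⟩
    rintro ⟨L, hL, hLm⟩
    exact Markov.evalProd_ne_of_isAdmissible (fun j => (hx j).2) hg hL hLm
  intro hNT
  have : DiscreteTopology G := ⟨hNT _ B.isTopologicalGroup hT2⟩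
  obtain ⟨_, ⟨n, rfl⟩, hn⟩ := B.nhds_one_hasBasis.mem_iff.1 ((isOpen_discrete {1}).mem_nhds rfl)
  exact (hx n).1 (hn (Markov.apply_mem_nbhd e x n))

theorem countable_nonTopologizable_iff_algebraicallyIsolated
    {G : Type*} [Group G] [Countable G] :
    NonTopologizable G ↔ AlgebraicallyIsolated G :=
  ⟨fun hNT => by_contra fun h => not_nonTopologizable_of_not_algebraicallyIsolated h hNT,
    AlgebraicallyIsolated.nonTopologizable⟩
end

section
/- Every abelian non-topologizable group is finite. Equivalently, every infinite abelian group admits a non-discrete Hausdorff group topology. -/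
open Topology

noncomputable def ratCircleToRealCircle : AddCircle (1 : ℚ) →+ AddCircle (1 : ℝ) :=
  QuotientAddGroup.map _ _ (Rat.castHom ℝ).toAddMonoidHom <|
    AddSubgroup.zmultiples_le.2 (by simp)

lemma ratCircleToRealCircle_injective : Function.Injective ratCircleToRealCircle := by
  refine (injective_iff_map_eq_zero _).2 fun x hx => ?_
  induction x using QuotientAddGroup.induction_on with
  | H q =>
    have h : ((q : ℝ) : AddCircle (1 : ℝ)) = 0 := hx
    rw [QuotientAddGroup.eq_zero_iff, AddSubgroup.mem_zmultiples_iff] at h ⊢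
    obtain ⟨n, hn⟩ := h
    simp only [zsmul_one] at hn ⊢
    exact ⟨n, by exact_mod_cast hn⟩

noncomputable def evalCharactersToRealCircle (A : Type*) [AddCommGroup A] :
    A →+ (CharacterModule A → AddCircle (1 : ℝ)) :=
  AddMonoidHom.pi fun c => ratCircleToRealCircle.comp c

lemma evalCharactersToRealCircle_injective (A : Type*) [AddCommGroup A] :
    Function.Injective (evalCharactersToRealCircle A) := by
  refine (injective_iff_map_eq_zero _).2 fun a ha => CharacterModule.eq_zero_of_character_apply
    fun c => (map_eq_zero_iff _ ratCircleToRealCircle_injective).1 (congrFun ha c)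

theorem NonTopologizable.finite_of_injective_s9 {G K : Type*} [Group G] [Group K]
    [TopologicalSpace K] [IsTopologicalGroup K] [T2Space K] [CompactSpace K]
    (hG : NonTopologizable G) {f : G →* K} (hf : Function.Injective f) : Finite G := by
  let t : TopologicalSpace G := .induced f ‹_›
  have hemb : IsEmbedding f := ⟨⟨rfl⟩, hf⟩
  have : IsTopologicalGroup G := topologicalGroup_induced f
  have : T2Space G := hemb.t2Space
  have : DiscreteTopology G := ⟨hG t ‹_› ‹_›⟩
  have : DiscreteTopology f.range := hemb.toHomeomorph.discreteTopology
  have : CompactSpace f.range :=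
    isCompact_iff_compactSpace.1 Subgroup.isClosed_of_discrete.isCompact
  have := finite_of_compact_of_discrete (X := f.range)
  exact Finite.of_injective _ (f.rangeRestrict_injective_iff.2 hf)

theorem abelian_nonTopologizable_finite {G : Type*} [CommGroup G]
    (h : NonTopologizable G) : Finite G := by
  have : Fact ((0 : ℝ) < 1) := ⟨one_pos⟩
  let K := CharacterModule (Additive G) → AddCircle (1 : ℝ)
  have : T2Space (Multiplicative K) := inferInstanceAs (T2Space K)
  have : CompactSpace (Multiplicative K) := inferInstanceAs (CompactSpace K)
  exact h.finite_of_injective_s9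
    (f := AddMonoidHom.toMultiplicativeRight (evalCharactersToRealCircle (Additive G)))
    (evalCharactersToRealCircle_injective (Additive G))
end

section
/- Let H be a group and let N be the intersection of all normal subgroups of finite index in H. If the quotient group H/N is non-topologizable, then N has finite index in H. -/
open Function Topology

theorem finite_of_isInducing_pi {G ι : Type*} {P : ι → Type*} [Group G] [TopologicalSpace G]
    [DiscreteTopology G] [∀ i, Group (P i)] [∀ i, TopologicalSpace (P i)] [∀ i, Finite (P i)]
    {f : G →* ∀ i, P i} (hf : IsInducing f) : Finite G := by
  obtain ⟨U, hU, hUf⟩ := hf.isOpen_iff.mp (isOpen_discrete ({1} : Set G))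
  have h1U : f 1 ∈ U := by
    rw [← Set.mem_preimage, hUf]
    rfl
  obtain ⟨I, u, hu, hIU⟩ := isOpen_pi_iff.mp hU (f 1) h1U
  refine Finite.of_injective (fun x (i : I) => f x i) fun x y hxy => ?_
  have hU' : f (x⁻¹ * y) ∈ U := hIU fun i hi => by
    have hi' : f x i = f y i := congrFun hxy ⟨i, hi⟩
    simpa [hi'] using (hu i hi).2
  have hxy' : x⁻¹ * y ∈ ({1} : Set G) := by rwa [← hUf]
  exact inv_mul_eq_one.mp hxy'

theorem NonTopologizable.finite_of_injective_pi {G ι : Type*} {P : ι → Type*} [Group G]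
    [∀ i, Group (P i)] [∀ i, Finite (P i)] (hG : NonTopologizable G) {f : G →* ∀ i, P i}
    (hf : Injective f) : Finite G := by
  let _ : ∀ i, TopologicalSpace (P i) := fun _ => ⊥
  have _ : ∀ i, DiscreteTopology (P i) := fun _ => ⟨rfl⟩
  let _ : TopologicalSpace G := .induced f inferInstance
  have hemb : IsEmbedding f := ⟨⟨rfl⟩, hf⟩
  have hTG : IsTopologicalGroup G := topologicalGroup_induced f
  have hT2 : T2Space G := hemb.t2Space
  have : DiscreteTopology G := ⟨hG _ hTG hT2⟩
  exact finite_of_isInducing_pi hemb.isInducing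

theorem NonTopologizable.finite {G : Type*} [Group G] [Group.ResiduallyFinite G]
    (hG : NonTopologizable G) : Finite G :=
  hG.finite_of_injective_pi
    (f := MonoidHom.pi fun K : FiniteIndexNormalSubgroup G => QuotientGroup.mk' K.toSubgroup) <|
    (injective_iff_map_eq_one _).mpr fun g hg =>
      Group.eq_one_iff_forall_finiteIndexNormalSubroup g fun K =>
        (QuotientGroup.eq_one_iff g).mp (congrFun hg K)

theorem residuallyFinite_quotient_of_eq_iInf_finiteIndex {H : Type*} [Group H]
    (N : Subgroup H) [N.Normal]
    (hN : N = ⨅ (K : Subgroup H) (_ : K.Normal) (_ : K.FiniteIndex), K) :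
    Group.ResiduallyFinite (H ⧸ N) := by
  refine Group.residuallyFinite_of_forall_exists_finite_monoidHom fun g hg => ?_
  obtain ⟨x, rfl⟩ := QuotientGroup.mk_surjective g
  have hx : x ∉ N := by rwa [Ne, QuotientGroup.eq_one_iff] at hg
  rw [hN] at hx
  simp only [Subgroup.mem_iInf, not_forall] at hx
  obtain ⟨K, hK, hKf, hxK⟩ := hx
  have hNK : N ≤ K := hN ▸ iInf_le_of_le K (iInf_le_of_le hK (iInf_le _ hKf))
  refine ⟨H ⧸ K, inferInstance, inferInstance, QuotientGroup.map N K (.id H) hNK, ?_⟩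
  change (x : H ⧸ K) ≠ 1
  rwa [Ne, QuotientGroup.eq_one_iff]

theorem finiteIndex_of_nonTopologizable_quotient {H : Type*} [Group H]
    (N : Subgroup H) [N.Normal]
    (hN : N = ⨅ (K : Subgroup H) (_ : K.Normal) (_ : K.FiniteIndex), K)
    (h : NonTopologizable (H ⧸ N)) : N.FiniteIndex := by
  have := residuallyFinite_quotient_of_eq_iInf_finiteIndex N hN
  have := h.finite
  exact Subgroup.finiteIndex_of_finite_quotient
end
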